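/- The eigenvalue region of 3×3 permutative doubly stochastic matrices equals Π₂ ∪ Π₃, i.e., [−1,1] together with the convex hull of the cube roots of unity; in particular, the eigenvalues of every 3×3 circulant with nonnegative first row summing to 1 lie in Π₃, and Π₃ = {c₁ + c₂ω + c₃ω² : cᵢ ≥ 0, c₁+c₂+c₃ = 1, ω = e^{2πi/3}} ∪ conjugates. -/

import Mathlib

def IsDoublyStochastic {n : ℕ} (A : Matrix (Fin n) (Fin n) ℝ) : Prop :=
  (∀ i j, 0 ≤ A i j) ∧ (∀ i, ∑ j, A i j = 1) ∧ (∀ j, ∑ i, A i j = 1)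

/-- Every row is a permutation of any other row. -/
def IsPermutative {n : ℕ} (A : Matrix (Fin n) (Fin n) ℝ) : Prop :=
  ∀ i i' : Fin n, ∃ σ : Equiv.Perm (Fin n), ∀ j, A i j = A i' (σ j)

def HasEig {n : ℕ} (A : Matrix (Fin n) (Fin n) ℝ) (μ : ℂ) : Prop :=
  ∃ w : Fin n → ℂ, w ≠ 0 ∧ (A.map (fun r => (r : ℂ))).mulVec w = μ • w

/-- A primitive cube root of unity. -/
noncomputable def ω : ℂ := Complex.exp (((2 * Real.pi / 3 : ℝ) : ℂ) * Complex.I)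

/-!
If `μ` is a nonreal eigenvalue of a real `3 × 3` matrix `A` with unit row sums, the spectrum of
`A` is `{1, μ, μ̄}`, so Vieta gives `tr A = 1 + 2 Re μ` and `e₂ A = 2 Re μ + |μ|²`, where `e₂ A`
is the sum of the principal `2 × 2` minors. For nonnegative `A`, `tr A ≥ 0` and
`(tr A)² - 3 e₂ A = ½ ∑ (aᵢᵢ - aⱼⱼ)² + 3 ∑ aᵢⱼ aⱼᵢ ≥ 0`; these read `Re μ ≥ -1/2` and
`3 (Im μ)² ≤ (1 - Re μ)²`, which together with `|μ| ≤ 1` (Gershgorin) put `μ` in `Π₃`.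
Conversely, the circulant with first row `(c₁, c₂, c₃)` has eigenvalue `c₁ + c₂ ω + c₃ ω²`,
which fills `Π₃`, and the anticirculant with first row `(a, b, b)` has eigenvalues `a + 2b` and
`±(a - b)`, which fill `[-1, 1]`.
-/

open Complex in
lemma omega_re : ω.re = -(1 / 2) := by
  rw [ω, exp_ofReal_mul_I_re, show 2 * Real.pi / 3 = Real.pi - Real.pi / 3 by ring,
    Real.cos_pi_sub, Real.cos_pi_div_three]

open Complex in
lemma omega_im : ω.im = √3 / 2 := by
  rw [ω, exp_ofReal_mul_I_im, show 2 * Real.pi / 3 = Real.pi - Real.pi / 3 by ring,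
    Real.sin_pi_sub, Real.sin_pi_div_three]

lemma omega_sq_eq_conj : ω ^ 2 = (starRingEnd ℂ) ω := by
  have h3 : √3 ^ 2 = 3 := Real.sq_sqrt (by norm_num)
  apply Complex.ext <;>
    simp only [sq, Complex.mul_re, Complex.mul_im, Complex.conj_re, Complex.conj_im, omega_re,
      omega_im] <;> nlinarith

lemma conj_omega_sq : (starRingEnd ℂ) ω ^ 2 = ω := by
  rw [← map_pow, omega_sq_eq_conj, Complex.conj_conj]

lemma omega_sq_add_omega_add_one : ω ^ 2 + ω + 1 = 0 := by
  apply Complex.ext <;>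
    simp only [omega_sq_eq_conj, Complex.add_re, Complex.add_im, Complex.conj_re, Complex.conj_im,
      omega_re, omega_im, Complex.one_re, Complex.one_im, Complex.zero_re, Complex.zero_im] <;>
    ring

section ConvexHull

variable {𝕜 E : Type*} [Field 𝕜] [LinearOrder 𝕜] [IsStrictOrderedRing 𝕜] [AddCommGroup E]
  [Module 𝕜 E]

lemma convexHull_triple_eq (a b c : E) :
    convexHull 𝕜 {a, b, c} = {x | ∃ t₁ t₂ t₃ : 𝕜, 0 ≤ t₁ ∧ 0 ≤ t₂ ∧ 0 ≤ t₃ ∧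
      t₁ + t₂ + t₃ = 1 ∧ t₁ • a + t₂ • b + t₃ • c = x} := by
  refine (convexHull_min ?_ ?_).antisymm ?_
  · rintro x (rfl | rfl | rfl)
    · exact ⟨1, 0, 0, by simp⟩
    · exact ⟨0, 1, 0, by simp⟩
    · exact ⟨0, 0, 1, by simp⟩
  · rintro _ ⟨s₁, s₂, s₃, hs₁, hs₂, hs₃, hs, rfl⟩ _ ⟨t₁, t₂, t₃, ht₁, ht₂, ht₃, ht, rfl⟩
      p q hp hq hpq
    refine ⟨p * s₁ + q * t₁, p * s₂ + q * t₂, p * s₃ + q * t₃, by positivity,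
      by positivity, by positivity, by linear_combination p * hs + q * ht + hpq, ?_⟩
    simp only [smul_add, smul_smul, add_smul]
    abel
  · rintro _ ⟨t₁, t₂, t₃, h₁, h₂, h₃, ht, rfl⟩
    have := (convex_convexHull 𝕜 ({a, b, c} : Set E)).sum_mem (t := Finset.univ)
      (w := ![t₁, t₂, t₃]) (z := ![a, b, c])
      (fun i _ => by fin_cases i <;> assumption) (by simpa [Fin.sum_univ_three] using ht)
      (fun i _ => subset_convexHull 𝕜 _ (by fin_cases i <;> simp))
    simpa [Fin.sum_univ_three] using this

end ConvexHull

lemma mem_convexHull_omega_iff {z : ℂ} :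
    z ∈ convexHull ℝ {1, ω, ω ^ 2} ↔ ∃ c₁ c₂ c₃ : ℝ, 0 ≤ c₁ ∧ 0 ≤ c₂ ∧ 0 ≤ c₃ ∧
      c₁ + c₂ + c₃ = 1 ∧ z = c₁ + c₂ * ω + c₃ * ω ^ 2 := by
  simp [convexHull_triple_eq, Complex.real_smul, eq_comm]

lemma mem_convexHull_omega_of_re_im {z : ℂ} (hre : -(1 / 2) ≤ z.re)
    (him : |√3 * z.im| ≤ 1 - z.re) : z ∈ convexHull ℝ {1, ω, ω ^ 2} := by
  obtain ⟨him₁, him₂⟩ := abs_le.mp him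
  have h3 : √3 ^ 2 = 3 := Real.sq_sqrt (by norm_num)
  refine mem_convexHull_omega_iff.mpr ⟨(1 + 2 * z.re) / 3, (1 - z.re + √3 * z.im) / 3,
    (1 - z.re - √3 * z.im) / 3, by linarith, by linarith, by linarith, by ring, ?_⟩
  apply Complex.ext
  · simp [omega_sq_eq_conj, omega_re]; ring
  · simp [omega_sq_eq_conj, omega_im]; linear_combination (-z.im / 3) * h3

def Matrix.anticirculant {α : Type*} {n : ℕ} (v : Fin n → α) : Matrix (Fin n) (Fin n) α :=
  Matrix.of fun i j => v (i + j)

section Circulant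

variable {n : ℕ} [NeZero n]

lemma isDoublyStochastic_circulant {v : Fin n → ℝ} (h₀ : ∀ i, 0 ≤ v i) (h₁ : ∑ i, v i = 1) :
    IsDoublyStochastic (Matrix.circulant v) :=
  ⟨fun _ _ => h₀ _, fun i => (Equiv.sum_comp (Equiv.subLeft i) v).trans h₁,
    fun j => (Equiv.sum_comp (Equiv.subRight j) v).trans h₁⟩

lemma isDoublyStochastic_anticirculant {v : Fin n → ℝ} (h₀ : ∀ i, 0 ≤ v i)
    (h₁ : ∑ i, v i = 1) : IsDoublyStochastic (Matrix.anticirculant v) :=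
  ⟨fun _ _ => h₀ _, fun i => (Equiv.sum_comp (Equiv.addLeft i) v).trans h₁,
    fun j => (Equiv.sum_comp (Equiv.addRight j) v).trans h₁⟩

lemma isPermutative_circulant (v : Fin n → ℝ) : IsPermutative (Matrix.circulant v) :=
  fun i i' => ⟨Equiv.addRight (i' - i), fun j => by
    simp only [Matrix.circulant_apply, Equiv.coe_addRight]; congr 1; abel⟩

lemma isPermutative_anticirculant (v : Fin n → ℝ) : IsPermutative (Matrix.anticirculant v) :=
  fun i i' => ⟨Equiv.addRight (i - i'), fun j => by
    simp only [Matrix.anticirculant, Matrix.of_apply, Equiv.coe_addRight]; congr 1; abel⟩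

end Circulant

lemma circulant_fin_three {α : Type*} (a b c : α) :
    Matrix.circulant ![a, b, c] = !![a, c, b; b, a, c; c, b, a] := by
  ext i j; fin_cases i <;> fin_cases j <;> rfl

lemma anticirculant_fin_three {α : Type*} (a b c : α) :
    Matrix.anticirculant ![a, b, c] = !![a, b, c; b, c, a; c, a, b] := by
  ext i j; fin_cases i <;> fin_cases j <;> rfl

section Cubic

variable {R : Type*} [CommRing R]

def principalMinorSum (M : Matrix (Fin 3) (Fin 3) R) : R :=
  (M 0 0 * M 1 1 - M 0 1 * M 1 0) + (M 0 0 * M 2 2 - M 0 2 * M 2 0) +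
    (M 1 1 * M 2 2 - M 1 2 * M 2 1)

lemma det_smul_one_sub_fin_three (M : Matrix (Fin 3) (Fin 3) R) (z : R) :
    (z • 1 - M).det = z ^ 3 - M.trace * z ^ 2 + principalMinorSum M * z - M.det := by
  simp [Matrix.det_fin_three, Matrix.trace_fin_three, principalMinorSum]
  ring

lemma cubic_coeffs_eq_of_distinct_roots [IsDomain R] {p q r a b c : R} (hab : a ≠ b)
    (hac : a ≠ c) (hbc : b ≠ c) (ha : a ^ 3 - p * a ^ 2 + q * a - r = 0)
    (hb : b ^ 3 - p * b ^ 2 + q * b - r = 0) (hc : c ^ 3 - p * c ^ 2 + q * c - r = 0) :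
    p = a + b + c ∧ q = a * b + b * c + c * a := by
  have hab' : a ^ 2 + a * b + b ^ 2 - p * (a + b) + q = 0 :=
    (mul_eq_zero.mp (by linear_combination ha - hb : (a - b) * _ = 0)).resolve_left
      (sub_ne_zero.mpr hab)
  have hac' : a ^ 2 + a * c + c ^ 2 - p * (a + c) + q = 0 :=
    (mul_eq_zero.mp (by linear_combination ha - hc : (a - c) * _ = 0)).resolve_left
      (sub_ne_zero.mpr hac)
  have hp : p = a + b + c := by
    have h : (b - c) * (a + b + c - p) = 0 := by linear_combination hab' - hac'
    exact (sub_eq_zero.mp ((mul_eq_zero.mp h).resolve_left (sub_ne_zero.mpr hbc))).symm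
  exact ⟨hp, by linear_combination hab' + (a + b) * hp⟩

end Cubic

section Eigenvalues

variable {n : ℕ}

lemma hasEig_iff_det (A : Matrix (Fin n) (Fin n) ℝ) (μ : ℂ) :
    HasEig A μ ↔ (μ • 1 - A.map Complex.ofReal).det = 0 := by
  rw [← Matrix.exists_mulVec_eq_zero_iff]
  simp [HasEig, Matrix.sub_mulVec, sub_eq_zero, eq_comm, Matrix.smul_mulVec]

lemma hasEig_one_of_sum_row_eq_one [NeZero n] {A : Matrix (Fin n) (Fin n) ℝ}
    (hrow : ∀ i, ∑ j, A i j = 1) : HasEig A 1 := by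
  refine ⟨fun _ => 1, Function.ne_iff.mpr ⟨0, one_ne_zero⟩, funext fun i => ?_⟩
  simp [Matrix.mulVec, dotProduct, ← Complex.ofReal_sum, hrow]

lemma norm_le_one_of_hasEig {A : Matrix (Fin n) (Fin n) ℝ} (h₀ : ∀ i j, 0 ≤ A i j)
    (hrow : ∀ i, ∑ j, A i j = 1) {μ : ℂ} (hμ : HasEig A μ) : ‖μ‖ ≤ 1 := by
  obtain ⟨w, hw, hAw⟩ := hμ
  obtain ⟨k, hk⟩ := eigenvalue_mem_ball (A := A.map Complex.ofReal)
    (Module.End.hasEigenvalue_of_hasEigenvector ⟨Module.End.mem_eigenspace_iff.mpr hAw, hw⟩)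
  have hrad : ∑ j ∈ Finset.univ.erase k, ‖(A k j : ℂ)‖ = 1 - A k k := by
    simp [abs_of_nonneg (h₀ _ _), Finset.sum_erase_eq_sub, hrow]
  rw [Metric.mem_closedBall, dist_eq_norm] at hk
  simp only [Matrix.map_apply, hrad] at hk
  calc ‖μ‖ ≤ ‖(A k k : ℂ)‖ + ‖μ - A k k‖ := norm_le_insert' _ _
    _ ≤ A k k + (1 - A k k) := by rw [Complex.norm_real, Real.norm_of_nonneg (h₀ k k)]; gcongr
    _ = 1 := by ring

end Eigenvalues

lemma hasEig_iff_cubic (A : Matrix (Fin 3) (Fin 3) ℝ) (μ : ℂ) :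
    HasEig A μ ↔ μ ^ 3 - A.trace * μ ^ 2 + principalMinorSum A * μ - A.det = 0 := by
  rw [hasEig_iff_det, det_smul_one_sub_fin_three]
  simp [Matrix.trace_fin_three, Matrix.det_fin_three, principalMinorSum]

lemma three_mul_principalMinorSum_le_sq_trace {R : Type*} [CommRing R] [LinearOrder R]
    [IsStrictOrderedRing R] {A : Matrix (Fin 3) (Fin 3) R} (h₀ : ∀ i j, 0 ≤ A i j) :
    3 * principalMinorSum A ≤ A.trace ^ 2 := by
  rw [principalMinorSum, Matrix.trace_fin_three]
  nlinarith [sq_nonneg (A 0 0 - A 1 1), sq_nonneg (A 0 0 - A 2 2), sq_nonneg (A 1 1 - A 2 2),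
    mul_nonneg (h₀ 0 1) (h₀ 1 0), mul_nonneg (h₀ 0 2) (h₀ 2 0), mul_nonneg (h₀ 1 2) (h₀ 2 1)]

lemma trace_eq_and_principalMinorSum_eq_of_hasEig {A : Matrix (Fin 3) (Fin 3) ℝ}
    (hrow : ∀ i, ∑ j, A i j = 1) {μ : ℂ} (hμ : HasEig A μ) (him : μ.im ≠ 0) :
    A.trace = 1 + 2 * μ.re ∧ principalMinorSum A = 2 * μ.re + Complex.normSq μ := by
  have h1 := (hasEig_iff_cubic A 1).mp (hasEig_one_of_sum_row_eq_one hrow)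
  have hμ' := (hasEig_iff_cubic A μ).mp hμ
  have hμ'' : (starRingEnd ℂ μ) ^ 3 - A.trace * (starRingEnd ℂ μ) ^ 2 +
      principalMinorSum A * starRingEnd ℂ μ - A.det = 0 := by
    simpa using congrArg (starRingEnd ℂ) hμ'
  have h1μ : (1 : ℂ) ≠ μ := fun h => him (h ▸ Complex.one_im)
  have h1μ' : (1 : ℂ) ≠ starRingEnd ℂ μ :=
    fun h => him (by simpa using congrArg Complex.im h.symm)
  have hμμ' : μ ≠ starRingEnd ℂ μ := fun h => him (Complex.conj_eq_iff_im.mp h.symm)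
  obtain ⟨hT, hS⟩ := cubic_coeffs_eq_of_distinct_roots h1μ h1μ' hμμ' h1 hμ' hμ''
  rw [add_assoc, Complex.add_conj] at hT
  rw [one_mul, mul_comm _ (1 : ℂ), one_mul, add_right_comm, Complex.add_conj,
    Complex.mul_conj] at hS
  exact ⟨by exact_mod_cast hT, by exact_mod_cast hS⟩

lemma mem_convexHull_omega_of_hasEig_of_im_ne_zero {A : Matrix (Fin 3) (Fin 3) ℝ}
    (h₀ : ∀ i j, 0 ≤ A i j) (hrow : ∀ i, ∑ j, A i j = 1) {μ : ℂ} (hμ : HasEig A μ)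
    (him : μ.im ≠ 0) : μ ∈ convexHull ℝ {1, ω, ω ^ 2} := by
  obtain ⟨hT, hS⟩ := trace_eq_and_principalMinorSum_eq_of_hasEig hrow hμ him
  have hT₀ : 0 ≤ A.trace := Finset.sum_nonneg fun i _ => h₀ i i
  have hTS := three_mul_principalMinorSum_le_sq_trace h₀
  have hre : μ.re ≤ 1 := (Complex.re_le_norm μ).trans (norm_le_one_of_hasEig h₀ hrow hμ)
  rw [hT, hS, Complex.normSq_apply] at hTS
  rw [hT] at hT₀
  refine mem_convexHull_omega_of_re_im (by linarith) (abs_le_of_sq_le_sq ?_ (by linarith))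
  rw [mul_pow, Real.sq_sqrt (by norm_num)]
  nlinarith

lemma hasEig_circulant_iff (a b c : ℝ) (μ : ℂ) :
    HasEig !![a, b, c; c, a, b; b, c, a] μ ↔
      μ = a + b + c ∨ μ = a + b * ω + c * ω ^ 2 ∨ μ = a + b * ω ^ 2 + c * ω := by
  rw [hasEig_iff_cubic]
  have hfactor : μ ^ 3 - ((!![a, b, c; c, a, b; b, c, a].trace : ℝ) : ℂ) * μ ^ 2 +
      (principalMinorSum !![a, b, c; c, a, b; b, c, a] : ℝ) * μ -
        (!![a, b, c; c, a, b; b, c, a].det : ℝ) =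
      (μ - (a + b + c)) * (μ - (a + b * ω + c * ω ^ 2)) * (μ - (a + b * ω ^ 2 + c * ω)) := by
    simp [Matrix.trace_fin_three, Matrix.det_fin_three, principalMinorSum]
    linear_combination (μ - a - b - c) * ((μ - a) * (b + c) - (b ^ 2 + c ^ 2) * (ω - 1) -
      b * c * (ω ^ 2 - ω + 1)) * omega_sq_add_omega_add_one
  rw [hfactor]
  simp only [mul_eq_zero, sub_eq_zero, or_assoc]

lemma hasEig_anticirculant_of_sq_eq {a b c r : ℝ}
    (hr : r ^ 2 = a ^ 2 + b ^ 2 + c ^ 2 - a * b - b * c - c * a) :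
    HasEig !![a, b, c; b, c, a; c, a, b] r := by
  rw [hasEig_iff_cubic]
  simp [Matrix.trace_fin_three, Matrix.det_fin_three, principalMinorSum]
  norm_cast
  linear_combination (r - a - b - c) * hr

lemma exists_hasEig_of_mem_Icc {r : ℝ} (hr : r ∈ Set.Icc (-1) 1) :
    ∃ A : Matrix (Fin 3) (Fin 3) ℝ, IsDoublyStochastic A ∧ IsPermutative A ∧ HasEig A r := by
  have hr' : |r| ≤ 1 := abs_le.mpr hr
  have h₀ : ∀ i, 0 ≤ ![(1 + 2 * |r|) / 3, (1 - |r|) / 3, (1 - |r|) / 3] i := by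
    intro i; fin_cases i <;> simp <;> linarith [abs_nonneg r]
  have h₁ : ∑ i, ![(1 + 2 * |r|) / 3, (1 - |r|) / 3, (1 - |r|) / 3] i = 1 := by
    simp only [Fin.sum_univ_three, Matrix.cons_val]; ring
  refine ⟨_, isDoublyStochastic_anticirculant h₀ h₁, isPermutative_anticirculant _, ?_⟩
  rw [anticirculant_fin_three]
  exact hasEig_anticirculant_of_sq_eq (by rw [← sq_abs r]; ring)

lemma exists_hasEig_of_mem_convexHull_omega {z : ℂ} (hz : z ∈ convexHull ℝ {1, ω, ω ^ 2}) :
    ∃ A : Matrix (Fin 3) (Fin 3) ℝ, IsDoublyStochastic A ∧ IsPermutative A ∧ HasEig A z := by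
  obtain ⟨c₁, c₂, c₃, h₁, h₂, h₃, hs, rfl⟩ := mem_convexHull_omega_iff.mp hz
  have h₀ : ∀ i, 0 ≤ ![c₁, c₃, c₂] i := by intro i; fin_cases i <;> assumption
  have h₁ : ∑ i, ![c₁, c₃, c₂] i = 1 := by
    simp only [Fin.sum_univ_three, Matrix.cons_val]; linarith
  refine ⟨_, isDoublyStochastic_circulant h₀ h₁, isPermutative_circulant _, ?_⟩
  rw [circulant_fin_three]
  exact (hasEig_circulant_iff c₁ c₂ c₃ _).mpr (Or.inr (Or.inl rfl))

lemma mem_image_Icc_union_convexHull_omega_of_hasEig {A : Matrix (Fin 3) (Fin 3) ℝ}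
    (h₀ : ∀ i j, 0 ≤ A i j) (hrow : ∀ i, ∑ j, A i j = 1) {μ : ℂ} (hμ : HasEig A μ) :
    μ ∈ ((↑) '' Set.Icc (-1 : ℝ) 1) ∪ convexHull ℝ {1, ω, ω ^ 2} := by
  by_cases him : μ.im = 0
  · refine Or.inl ⟨μ.re, abs_le.mp ?_, Complex.ext rfl him.symm⟩
    exact (Complex.abs_re_le_norm μ).trans (norm_le_one_of_hasEig h₀ hrow hμ)
  · exact Or.inr (mem_convexHull_omega_of_hasEig_of_im_ne_zero h₀ hrow hμ him)

lemma mem_convexHull_omega_of_hasEig_circulant {c₁ c₂ c₃ : ℝ} (h₁ : 0 ≤ c₁) (h₂ : 0 ≤ c₂)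
    (h₃ : 0 ≤ c₃) (hs : c₁ + c₂ + c₃ = 1) {μ : ℂ}
    (hμ : HasEig !![c₁, c₂, c₃; c₃, c₁, c₂; c₂, c₃, c₁] μ) :
    μ ∈ convexHull ℝ {1, ω, ω ^ 2} := by
  rw [mem_convexHull_omega_iff]
  rcases (hasEig_circulant_iff c₁ c₂ c₃ μ).mp hμ with rfl | rfl | rfl
  · exact ⟨1, 0, 0, by norm_num, le_rfl, le_rfl, by norm_num, by push_cast [← hs]; ring⟩
  · exact ⟨c₁, c₂, c₃, h₁, h₂, h₃, hs, rfl⟩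
  · exact ⟨c₁, c₃, c₂, h₁, h₃, h₂, by linarith, by ring⟩

lemma convexHull_omega_eq :
    convexHull ℝ {1, ω, ω ^ 2} = {z : ℂ | ∃ c₁ c₂ c₃ : ℝ, 0 ≤ c₁ ∧ 0 ≤ c₂ ∧ 0 ≤ c₃ ∧
      c₁ + c₂ + c₃ = 1 ∧ (z = c₁ + c₂ * ω + c₃ * ω ^ 2 ∨
        z = c₁ + c₂ * (starRingEnd ℂ) ω + c₃ * ((starRingEnd ℂ) ω) ^ 2)} := by
  ext z
  rw [mem_convexHull_omega_iff]
  constructor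
  · rintro ⟨c₁, c₂, c₃, h₁, h₂, h₃, hs, rfl⟩
    exact ⟨c₁, c₂, c₃, h₁, h₂, h₃, hs, Or.inl rfl⟩
  · rintro ⟨c₁, c₂, c₃, h₁, h₂, h₃, hs, rfl | rfl⟩
    · exact ⟨c₁, c₂, c₃, h₁, h₂, h₃, hs, rfl⟩
    · refine ⟨c₁, c₃, c₂, h₁, h₃, h₂, by linarith, ?_⟩
      rw [conj_omega_sq, ← omega_sq_eq_conj]
      ring

theorem stmt19 :
    {μ : ℂ | ∃ A : Matrix (Fin 3) (Fin 3) ℝ,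
        IsDoublyStochastic A ∧ IsPermutative A ∧ HasEig A μ}
      = ((fun r : ℝ => (r : ℂ)) '' Set.Icc (-1) 1) ∪
          convexHull ℝ ({1, ω, ω ^ 2} : Set ℂ) ∧
    (∀ c₁ c₂ c₃ : ℝ, 0 ≤ c₁ → 0 ≤ c₂ → 0 ≤ c₃ → c₁ + c₂ + c₃ = 1 →
      ∀ μ : ℂ, HasEig (!![c₁, c₂, c₃; c₃, c₁, c₂; c₂, c₃, c₁]) μ →
        μ ∈ convexHull ℝ ({1, ω, ω ^ 2} : Set ℂ)) ∧
    convexHull ℝ ({1, ω, ω ^ 2} : Set ℂ)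
      = {z : ℂ | ∃ c₁ c₂ c₃ : ℝ, 0 ≤ c₁ ∧ 0 ≤ c₂ ∧ 0 ≤ c₃ ∧ c₁ + c₂ + c₃ = 1 ∧
          (z = c₁ + c₂ * ω + c₃ * ω ^ 2 ∨
            z = c₁ + c₂ * (starRingEnd ℂ) ω + c₃ * ((starRingEnd ℂ) ω) ^ 2)} := by
  refine ⟨Set.Subset.antisymm ?_ ?_, ?_, convexHull_omega_eq⟩
  · rintro μ ⟨A, ⟨h₀, hrow, -⟩, -, hμ⟩
    exact mem_image_Icc_union_convexHull_omega_of_hasEig h₀ hrow hμ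
  · rintro _ (⟨r, hr, rfl⟩ | hz)
    exacts [exists_hasEig_of_mem_Icc hr, exists_hasEig_of_mem_convexHull_omega hz]
  · intro c₁ c₂ c₃ h₁ h₂ h₃ hs μ hμ
    exact mem_convexHull_omega_of_hasEig_circulant h₁ h₂ h₃ hs hμ
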